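/- arXiv:1702.07297 — 2 statements merged into one kernel-verified Lean document; each statement's English description precedes it below -/
import Mathlib

section
/- Consider any (K,N,Q,T)-scheme with singleton Reduce assignment, and let r̄ = (1/N)·∑_{k : W k ≠ ∅} |M k|. Then 0 ≤ r̄ ≤ Q, the communication load satisfies L ≥ ĝ(r̄), and consequently for any reals c_m, c_s > 0, max{c_m·p, c_s·L} ≥ min_{x ∈ [0,Q]} max{c_m·x/Q, c_s·ĝ(x)}. -/
/-- A (K,N,Q,T)-scheme: K servers, N input files, Q output functions,
T-bit intermediate values.  `M k` is the set of files mapped by server `k`,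
`W k` the set of functions reduced by server `k`, `len k` the length (in bits)
of server `k`'s message; `enc` produces the message of each server from its
locally computed intermediate values, and `dec` recovers, for each server `k`
and each `q ∈ W k`, the full row of intermediate values of function `q`
from all messages and the local values, correctly for every realization `v`. -/
structure Scheme (K N Q T : ℕ) where
  M : Fin K → Finset (Fin N)
  W : Fin K → Finset (Fin Q)
  cover : ∀ n : Fin N, ∃ k : Fin K, n ∈ M k
  len : Fin K → ℕ
  enc : (k : Fin K) → (Fin Q → {n : Fin N // n ∈ M k} → (Fin T → Bool)) →
    (Fin (len k) → Bool)
  dec : (k : Fin K) → (q : Fin Q) → q ∈ W k →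
    ((j : Fin K) → (Fin (len j) → Bool)) →
    (Fin Q → {n : Fin N // n ∈ M k} → (Fin T → Bool)) →
    (Fin N → Fin T → Bool)
  correct : ∀ (v : Fin Q × Fin N → Fin T → Bool) (k : Fin K) (q : Fin Q) (hq : q ∈ W k),
    dec k q hq (fun j => enc j (fun q' n => v (q', n.1))) (fun q' n => v (q', n.1)) =
      fun n => v (q, n)

/-- Peak computation load `p = (max_k |M k|)/N`. -/
noncomputable def peakLoad {K N Q T : ℕ} (S : Scheme K N Q T) : ℝ :=
  ((Finset.univ.sup (fun k : Fin K => (S.M k).card) : ℕ) : ℝ) / N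

/-- Communication load `L = (∑_k ℓ k)/(Q·N·T)`. -/
noncomputable def commLoad {K N Q T : ℕ} (S : Scheme K N Q T) : ℝ :=
  (∑ k : Fin K, (S.len k : ℝ)) / ((Q : ℝ) * N * T)

/-- Singleton Reduce assignment: the `W k` are pairwise disjoint, cover `Fin Q`,
and each server reduces at most one function. -/
def SingletonReduce {K N Q T : ℕ} (S : Scheme K N Q T) : Prop :=
  (∀ j k : Fin K, j ≠ k → Disjoint (S.W j) (S.W k)) ∧
  (∀ q : Fin Q, ∃ k : Fin K, q ∈ S.W k) ∧
  (∀ k : Fin K, (S.W k).card ≤ 1)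

/-- `ĝ`: the piecewise-linear interpolation at the integers of
`g(x) = (Q−x)/(Q·(x+1))`; on `[0,Q]` this is the lower convex envelope of the
points `{(r, g(r)) : r ∈ {0,…,Q}}` (note the formula also gives `ĝ(Q) = 0`). -/
noncomputable def gHat (Q : ℕ) (x : ℝ) : ℝ :=
  ((⌊x⌋ : ℝ) + 1 - x) * (((Q : ℝ) - (⌊x⌋ : ℝ)) / ((Q : ℝ) * ((⌊x⌋ : ℝ) + 1))) +
  (x - (⌊x⌋ : ℝ)) * (((Q : ℝ) - ((⌊x⌋ : ℝ) + 1)) / ((Q : ℝ) * ((⌊x⌋ : ℝ) + 2)))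

/-!
Order the functions by a permutation `σ` and let the reducers decode them in that order. When
function `q` is decoded, the values of every earlier function are already known, so the messages
only have to supply the values `v (q, n)` for files `n` that none of the reducers of `q` and its
predecessors has mapped: the messages carry at least `T` bits for each such pair. If file `n` is
mapped by the reducers of `d n` functions, then on average over `σ` there are
`(Q - d n) / (d n + 1)` such functions (a function outside these `d n` is ranked before all of
them with probability `1 / (d n + 1)`), whence `L ≥ (1/N) ∑ₙ g (d n)`. The `d n` are integers of
mean `r̄`, and at integer points `g` lies above each of its chords between consecutive integers, so
this average is at least `ĝ r̄`. Finally `r̄ ≤ Q p`, so `x = r̄` is admissible in the minimum.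
-/

open Finset

section RankCounting

variable {α : Type*} [Fintype α] [LinearOrder α]

def countBefore (D : Finset α) (σ : Equiv.Perm α) : ℕ := #{u | ∀ x ∈ D, σ u < σ x}

def permsRankingFirst (s : Finset α) (y : α) : Finset (Equiv.Perm α) :=
  {σ | ∀ x ∈ s, x ≠ y → σ y < σ x}

theorem swap_trans_mem_permsRankingFirst {s : Finset α} {y y' : α} {σ : Equiv.Perm α}
    (hσ : σ ∈ permsRankingFirst s y) (hy' : y' ∈ s) :
    (Equiv.swap y y').trans σ ∈ permsRankingFirst s y' := by
  simp only [permsRankingFirst, mem_filter, mem_univ, true_and, Equiv.trans_apply,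
    Equiv.swap_apply_right] at hσ ⊢
  intro x hx hxy'
  rcases eq_or_ne x y with rfl | hxy
  · rw [Equiv.swap_apply_left]
    exact hσ y' hy' (Ne.symm hxy')
  · rw [Equiv.swap_apply_of_ne_of_ne hxy hxy']
    exact hσ x hx hxy

theorem card_permsRankingFirst_eq {s : Finset α} {y y' : α} (hy : y ∈ s) (hy' : y' ∈ s) :
    #(permsRankingFirst s y) = #(permsRankingFirst s y') := by
  have hinv : ∀ σ : Equiv.Perm α, (Equiv.swap y y').trans ((Equiv.swap y y').trans σ) = σ :=
    fun σ => Equiv.ext fun x => by simp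
  refine card_bij' (fun σ _ => (Equiv.swap y y').trans σ) (fun σ _ => (Equiv.swap y y').trans σ)
    (fun σ hσ => swap_trans_mem_permsRankingFirst hσ hy') (fun σ hσ => ?_)
    (fun σ _ => hinv σ) (fun σ _ => hinv σ)
  rw [Equiv.swap_comm]
  exact swap_trans_mem_permsRankingFirst hσ hy

theorem existsUnique_mem_permsRankingFirst {s : Finset α} (hs : s.Nonempty) (σ : Equiv.Perm α) :
    ∃! y, y ∈ s ∧ σ ∈ permsRankingFirst s y := by
  simp only [permsRankingFirst, mem_filter, mem_univ, true_and]
  obtain ⟨y, hy, hmin⟩ := s.exists_min_image σ hs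
  refine ⟨y, ⟨hy, fun x hx hxy => (hmin x hx).lt_of_ne (σ.injective.ne hxy.symm)⟩, ?_⟩
  rintro y' ⟨hy', hfirst⟩
  by_contra hne
  exact absurd (hfirst y hy (Ne.symm hne)) (not_lt.mpr (hmin y' hy'))

theorem sum_card_permsRankingFirst {s : Finset α} (hs : s.Nonempty) :
    ∑ y ∈ s, #(permsRankingFirst s y) = (Fintype.card α).factorial := by
  calc ∑ y ∈ s, #(permsRankingFirst s y)
      = ∑ σ : Equiv.Perm α, #{y ∈ s | σ ∈ permsRankingFirst s y} := by
        have (y : α) : #(permsRankingFirst s y) =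
            ∑ σ : Equiv.Perm α, if σ ∈ permsRankingFirst s y then 1 else 0 := by
          rw [← card_filter, filter_mem_eq_inter, univ_inter]
        simp only [this, card_filter]
        exact sum_comm
    _ = ∑ _σ : Equiv.Perm α, 1 := by
        refine sum_congr rfl fun σ _ => ?_
        rw [card_eq_one]
        obtain ⟨y, hy, huniq⟩ := existsUnique_mem_permsRankingFirst hs σ
        exact ⟨y, by ext y'; simpa using ⟨fun h => huniq y' h, fun h => h ▸ hy⟩⟩
    _ = (Fintype.card α).factorial := by simp [Fintype.card_perm]

theorem card_mul_card_permsRankingFirst {s : Finset α} {y : α} (hy : y ∈ s) :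
    #s * #(permsRankingFirst s y) = (Fintype.card α).factorial := by
  rw [← sum_card_permsRankingFirst ⟨y, hy⟩, ← smul_eq_mul, ← sum_const]
  exact sum_congr rfl fun y' hy' => card_permsRankingFirst_eq hy hy'

theorem sum_countBefore_eq (D : Finset α) :
    ∑ σ : Equiv.Perm α, countBefore D σ =
      ∑ u ∈ Dᶜ, #(permsRankingFirst (insert u D) u) := by
  calc ∑ σ : Equiv.Perm α, countBefore D σ
      = ∑ u, #{σ : Equiv.Perm α | ∀ x ∈ D, σ u < σ x} := by
        simp only [countBefore, card_filter]
        exact sum_comm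
    _ = ∑ u ∈ Dᶜ, #(permsRankingFirst (insert u D) u) := by
        rw [← sum_subset (subset_univ Dᶜ) fun u _ hu => ?_]
        · refine sum_congr rfl fun u hu => congrArg card (filter_congr fun σ _ => ?_)
          rw [mem_compl] at hu
          simp only [mem_insert, forall_eq_or_imp, ne_eq, not_true, IsEmpty.forall_iff, true_and]
          exact ⟨fun h x hx _ => h x hx, fun h x hx => h x hx (ne_of_mem_of_not_mem hx hu)⟩
        · rw [mem_compl, not_not] at hu
          exact card_eq_zero.mpr (filter_eq_empty_iff.mpr fun σ _ h => (h u hu).false)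

theorem card_add_one_mul_sum_countBefore (D : Finset α) :
    (#D + 1) * ∑ σ : Equiv.Perm α, countBefore D σ =
      (Fintype.card α - #D) * (Fintype.card α).factorial := by
  rw [sum_countBefore_eq, mul_sum, ← card_compl, ← smul_eq_mul, ← sum_const]
  refine sum_congr rfl fun u hu => ?_
  rw [← card_insert_of_notMem (mem_compl.mp hu)]
  exact card_mul_card_permsRankingFirst (mem_insert_self u D)

end RankCounting

noncomputable def gFun (Q : ℕ) (x : ℝ) : ℝ := (Q - x) / (Q * (x + 1))

def secant (f : ℝ → ℝ) (m x : ℝ) : ℝ := (m + 1 - x) * f m + (x - m) * f (m + 1)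

theorem gHat_eq_secant (Q : ℕ) (x : ℝ) : gHat Q x = secant (gFun Q) ⌊x⌋ x := by
  simp only [gHat, secant, gFun]
  ring_nf

theorem secant_le_gFun {Q : ℕ} (hQ : 0 < Q) {m d : ℤ} (hm : 0 ≤ m) (hd : 0 ≤ d) :
    secant (gFun Q) m d ≤ gFun Q d := by
  have hm' : (0 : ℝ) ≤ m := by exact_mod_cast hm
  have hd' : (0 : ℝ) ≤ d := by exact_mod_cast hd
  have hQ' : (0 : ℝ) < Q := by exact_mod_cast hQ
  have hint : (0 : ℝ) ≤ (d - m) * (d - m - 1) := by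
    rcases le_or_gt d m with h | h
    · have h' : (d : ℝ) ≤ m := by exact_mod_cast h
      nlinarith
    · have h' : (m : ℝ) + 1 ≤ d := by exact_mod_cast h
      nlinarith
  have hgap : gFun Q d - secant (gFun Q) m d =
      (Q + 1) * ((d - m) * (d - m - 1)) / (Q * (m + 1) * (m + 2) * (d + 1)) := by
    simp only [secant, gFun]
    field_simp
    ring
  have : 0 ≤ gFun Q d - secant (gFun Q) m d := by
    rw [hgap]
    positivity
  linarith

theorem secant_average {ι : Type*} {s : Finset ι} (hs : s.Nonempty) (f : ℝ → ℝ) (m : ℝ)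
    (x : ι → ℝ) :
    (∑ i ∈ s, secant f m (x i)) / #s = secant f m ((∑ i ∈ s, x i) / #s) := by
  have : (#s : ℝ) ≠ 0 := by exact_mod_cast hs.card_ne_zero
  simp only [secant, sum_add_distrib, ← sum_mul, sum_sub_distrib, sum_const, nsmul_eq_mul]
  field_simp

theorem gHat_average_le {ι : Type*} {s : Finset ι} (hs : s.Nonempty) {Q : ℕ} (hQ : 0 < Q)
    (d : ι → ℕ) :
    gHat Q ((∑ i ∈ s, (d i : ℝ)) / #s) ≤ (∑ i ∈ s, gFun Q (d i)) / #s := by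
  set x := (∑ i ∈ s, (d i : ℝ)) / #s
  have hx : 0 ≤ x := by positivity
  calc gHat Q x = secant (gFun Q) ⌊x⌋ x := gHat_eq_secant Q x
    _ = (∑ i ∈ s, secant (gFun Q) ⌊x⌋ (d i)) / #s := (secant_average hs _ _ _).symm
    _ ≤ (∑ i ∈ s, gFun Q (d i)) / #s := by
        gcongr with i
        exact_mod_cast secant_le_gFun hQ (Int.floor_nonneg.mpr hx) (Int.natCast_nonneg (d i))

theorem sum_countBefore_eq_gFun {Q : ℕ} (hQ : 0 < Q) (D : Finset (Fin Q)) :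
    ∑ σ : Equiv.Perm (Fin Q), (countBefore D σ : ℝ) = Q.factorial * Q * gFun Q #D := by
  have h := card_add_one_mul_sum_countBefore D
  rw [Fintype.card_fin] at h
  have hD : #D ≤ Q := card_le_univ D |>.trans_eq (Fintype.card_fin Q)
  have hQ' : (0 : ℝ) < Q := by exact_mod_cast hQ
  have h' : ((#D : ℝ) + 1) * ∑ σ : Equiv.Perm (Fin Q), (countBefore D σ : ℝ) =
      (Q - #D) * Q.factorial := by
    exact_mod_cast h
  rw [gFun]
  field_simp
  linarith

theorem Fintype.pow_card_le_card_of_determined {ι β γ : Type*} [Fintype ι] [DecidableEq ι]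
    [Fintype β] [Nonempty β] [Fintype γ] (s : Finset ι) (g : (ι → β) → γ)
    (hg : ∀ v w, g v = g w → (∀ i ∉ s, v i = w i) → v = w) :
    Fintype.card β ^ #s ≤ Fintype.card γ := by
  have hinj : Function.Injective fun v : ι → β => (g v, fun i : ↥sᶜ => v i) := by
    intro v w h
    simp only [Prod.mk.injEq, funext_iff, Subtype.forall, mem_compl] at h
    exact hg v w h.1 h.2
  have hcard := Fintype.card_le_of_injective _ hinj
  rw [Fintype.card_fun, Fintype.card_prod, Fintype.card_fun, Fintype.card_coe,
    ← card_add_card_compl s, pow_add] at hcard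
  exact Nat.le_of_mul_le_mul_right hcard (by positivity)

namespace Scheme

variable {K N Q T : ℕ} (S : Scheme K N Q T)

def localValues (k : Fin K) (v : Fin Q × Fin N → Fin T → Bool) :
    Fin Q → {n // n ∈ S.M k} → Fin T → Bool :=
  fun q n => v (q, n.1)

def messages (v : Fin Q × Fin N → Fin T → Bool) : (j : Fin K) → Fin (S.len j) → Bool :=
  fun j => S.enc j (S.localValues j v)

def mappers (e : Fin Q → Fin K) (n : Fin N) : Finset (Fin Q) := {q | n ∈ S.M (e q)}

def unknown (e : Fin Q → Fin K) (σ : Equiv.Perm (Fin Q)) : Finset (Fin Q × Fin N) :=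
  {p | ∀ x ∈ S.mappers e p.2, σ p.1 < σ x}

variable {S} {e : Fin Q → Fin K}

theorem eq_of_messages_eq (he : ∀ q, q ∈ S.W (e q)) (σ : Equiv.Perm (Fin Q))
    {v w : Fin Q × Fin N → Fin T → Bool} (hmsg : S.messages v = S.messages w)
    (hknown : ∀ p ∉ S.unknown e σ, v p = w p) : v = w := by
  suffices ∀ q n, v (q, n) = w (q, n) from funext fun p => this p.1 p.2
  intro q
  induction q using (InvImage.wf σ wellFounded_lt).induction with
  | _ q ih =>
    have hloc : S.localValues (e q) v = S.localValues (e q) w := by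
      funext q' n
      by_cases hlt : σ q' < σ q
      · exact ih q' hlt n
      · refine hknown (q', n) fun hunk => hlt ?_
        exact (mem_filter.mp hunk).2 q (by simp [mappers, n.2])
    intro n
    calc v (q, n) = S.dec (e q) q (he q) (S.messages v) (S.localValues (e q) v) n :=
          (congrFun (S.correct v (e q) q (he q)) n).symm
      _ = S.dec (e q) q (he q) (S.messages w) (S.localValues (e q) w) n := by rw [hmsg, hloc]
      _ = w (q, n) := congrFun (S.correct w (e q) q (he q)) n

theorem card_unknown_mul_le (he : ∀ q, q ∈ S.W (e q)) (σ : Equiv.Perm (Fin Q)) :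
    #(S.unknown e σ) * T ≤ ∑ k, S.len k := by
  have h := Fintype.pow_card_le_card_of_determined (S.unknown e σ) S.messages
    fun v w hmsg hknown => eq_of_messages_eq he σ hmsg hknown
  simp only [Fintype.card_fun, Fintype.card_pi, Fintype.card_bool, Fintype.card_fin,
    prod_pow_eq_pow_sum, ← pow_mul] at h
  rw [mul_comm]
  exact (Nat.pow_le_pow_iff_right (by norm_num)).mp h

theorem card_unknown (σ : Equiv.Perm (Fin Q)) :
    #(S.unknown e σ) = ∑ n, countBefore (S.mappers e n) σ := by
  simp only [unknown, countBefore, card_filter, Fintype.sum_prod_type_right]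
  congr!

theorem sum_card_M_eq_sum_card_mappers (e : Fin Q → Fin K) :
    ∑ q, #(S.M (e q)) = ∑ n, #(S.mappers e n) := by
  simpa [bipartiteAbove, bipartiteBelow, mappers] using
    sum_card_bipartiteAbove_eq_sum_card_bipartiteBelow (s := univ) (t := univ)
      (r := fun q n => n ∈ S.M (e q))

theorem sum_gFun_div_le_commLoad (he : ∀ q, q ∈ S.W (e q)) (hN : 0 < N) (hQ : 0 < Q)
    (hT : 0 < T) : (∑ n, gFun Q #(S.mappers e n)) / N ≤ commLoad S := by
  have hround (σ : Equiv.Perm (Fin Q)) :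
      T * ∑ n, countBefore (S.mappers e n) σ ≤ ∑ k, S.len k := by
    rw [← card_unknown, mul_comm]
    exact card_unknown_mul_le he σ
  have havg : T * ∑ n, ∑ σ : Equiv.Perm (Fin Q), countBefore (S.mappers e n) σ ≤
      Q.factorial * ∑ k, S.len k := by
    rw [sum_comm, mul_sum]
    calc _ ≤ ∑ _σ : Equiv.Perm (Fin Q), ∑ k, S.len k := sum_le_sum fun σ _ => hround σ
      _ = _ := by simp [Fintype.card_perm]
  have hreal : (T : ℝ) * ∑ n, Q.factorial * Q * gFun Q #(S.mappers e n) ≤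
      Q.factorial * ∑ k, (S.len k : ℝ) := by
    simp only [← sum_countBefore_eq_gFun hQ]
    exact_mod_cast havg
  rw [← mul_sum] at hreal
  have : (0 : ℝ) < Q.factorial := by exact_mod_cast Q.factorial_pos
  rw [commLoad, div_le_div_iff₀ (by positivity) (by positivity)]
  nlinarith

end Scheme

theorem SingletonReduce.injective {K N Q T : ℕ} {S : Scheme K N Q T} (hS : SingletonReduce S)
    {e : Fin Q → Fin K} (he : ∀ q, q ∈ S.W (e q)) : Function.Injective e :=
  fun q q' h => card_le_one.mp (hS.2.2 (e q')) q (h ▸ he q) q' (he q')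

theorem SingletonReduce.filter_ne_empty_eq_image {K N Q T : ℕ} {S : Scheme K N Q T}
    (hS : SingletonReduce S) {e : Fin Q → Fin K} (he : ∀ q, q ∈ S.W (e q)) :
    univ.filter (fun k => S.W k ≠ ∅) = univ.image e := by
  ext k
  simp only [mem_filter, mem_univ, true_and, mem_image, ← nonempty_iff_ne_empty]
  refine ⟨fun ⟨q, hq⟩ => ⟨q, ?_⟩, fun ⟨q, hq⟩ => ⟨q, hq ▸ he q⟩⟩
  by_contra hne
  exact disjoint_left.mp (hS.1 _ _ hne) (he q) hq

theorem SingletonReduce.sum_active_eq {K N Q T : ℕ} {S : Scheme K N Q T}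
    (hS : SingletonReduce S) {e : Fin Q → Fin K} (he : ∀ q, q ∈ S.W (e q))
    (f : Fin K → ℝ) :
    ∑ k ∈ univ.filter (fun k => S.W k ≠ ∅), f k = ∑ q, f (e q) := by
  rw [hS.filter_ne_empty_eq_image he, sum_image fun q _ q' _ h => hS.injective he h]

theorem sInf_tradeoff_le {Q : ℕ} {r p L cm cs : ℝ} (hr : r ∈ Set.Icc (0 : ℝ) Q)
    (hp : r / Q ≤ p) (hL : gHat Q r ≤ L) (hcm : 0 < cm) (hcs : 0 < cs) :
    sInf ((fun x : ℝ => max (cm * x / Q) (cs * gHat Q x)) '' Set.Icc 0 Q) ≤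
      max (cm * p) (cs * L) := by
  have hbdd : BddBelow ((fun x : ℝ => max (cm * x / Q) (cs * gHat Q x)) '' Set.Icc 0 Q) := by
    refine ⟨0, ?_⟩
    rintro _ ⟨x, hx, rfl⟩
    exact (by have := hx.1; positivity : 0 ≤ cm * x / Q).trans (le_max_left _ _)
  refine (csInf_le hbdd ⟨r, hr, rfl⟩).trans (max_le_max ?_ ?_)
  · rw [mul_div_assoc]
    gcongr
  · gcongr

theorem parallel_lower_bound_general (K N Q T : ℕ) (hN : 0 < N) (hQ : 0 < Q)
    (hT : 0 < T) (S : Scheme K N Q T) (hS : SingletonReduce S)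
    (rbar : ℝ)
    (hrbar : rbar = (1 / (N : ℝ)) *
      ∑ k ∈ Finset.univ.filter (fun k : Fin K => S.W k ≠ ∅), ((S.M k).card : ℝ)) :
    0 ≤ rbar ∧ rbar ≤ (Q : ℝ) ∧ commLoad S ≥ gHat Q rbar ∧
    ∀ cm cs : ℝ, 0 < cm → 0 < cs →
      max (cm * peakLoad S) (cs * commLoad S) ≥
        sInf ((fun x : ℝ => max (cm * x / Q) (cs * gHat Q x)) '' Set.Icc (0 : ℝ) (Q : ℝ)) := by
  choose e he using hS.2.1
  rw [hS.sum_active_eq he, one_div_mul_eq_div] at hrbar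
  have hN' : (0 : ℝ) < N := by exact_mod_cast hN
  have hQ' : (0 : ℝ) < Q := by exact_mod_cast hQ
  have hr0 : 0 ≤ rbar := by rw [hrbar]; positivity
  have hrQ : rbar ≤ Q := by
    rw [hrbar, div_le_iff₀ hN']
    simpa using sum_le_card_nsmul univ (fun q => (#(S.M (e q)) : ℝ)) N fun q _ => by
      exact_mod_cast card_le_univ (S.M (e q)) |>.trans_eq (Fintype.card_fin N)
  have hp : rbar / Q ≤ peakLoad S := by
    rw [hrbar, peakLoad, div_right_comm, div_le_div_iff_of_pos_right hN', div_le_iff₀ hQ']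
    simpa [mul_comm] using sum_le_card_nsmul univ (fun q => (#(S.M (e q)) : ℝ))
      ((univ.sup fun k => #(S.M k) : ℕ) : ℝ) fun q _ => by
        exact_mod_cast le_sup (f := fun k => #(S.M k)) (mem_univ (e q))
  have hL : gHat Q rbar ≤ commLoad S := by
    have hmean :=
      gHat_average_le (univ_nonempty_iff.mpr ⟨⟨0, hN⟩⟩) hQ fun n => #(S.mappers e n)
    rw [card_univ, Fintype.card_fin] at hmean
    have hcount : ∑ q, (#(S.M (e q)) : ℝ) = ∑ n, (#(S.mappers e n) : ℝ) := by
      exact_mod_cast S.sum_card_M_eq_sum_card_mappers e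
    rw [hrbar, hcount]
    exact hmean.trans (S.sum_gFun_div_le_commLoad he hN hQ hT)
  exact ⟨hr0, hrQ, hL, fun cm cs hcm hcs => sInf_tradeoff_le ⟨hr0, hrQ⟩ hp hL hcm hcs⟩

/-- converse bound for the parallel implementation.  With
`r̄` the average number of files mapped per solver (normalized by `N`),
`L ≥ ĝ(r̄)`, and hence `max{c_m·p, c_s·L}` is at least the minimum over
`x ∈ [0,Q]` of `max{c_m·x/Q, c_s·ĝ(x)}`. -/
theorem parallel_lower_bound (K N Q T : ℕ) (hK : 0 < K) (hN : 0 < N) (hQ : 0 < Q)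
    (hT : 0 < T) (S : Scheme K N Q T) (hS : SingletonReduce S)
    (rbar : ℝ)
    (hrbar : rbar = (1 / (N : ℝ)) *
      ∑ k ∈ Finset.univ.filter (fun k : Fin K => S.W k ≠ ∅), ((S.M k).card : ℝ)) :
    0 ≤ rbar ∧ rbar ≤ (Q : ℝ) ∧ commLoad S ≥ gHat Q rbar ∧
    ∀ cm cs : ℝ, 0 < cm → 0 < cs →
      max (cm * peakLoad S) (cs * commLoad S) ≥
        sInf ((fun x : ℝ => max (cm * x / Q) (cs * gHat Q x)) '' Set.Icc (0 : ℝ) (Q : ℝ)) :=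
  parallel_lower_bound_general K N Q T hN hQ hT S hS rbar hrbar
end

section
/- Let c_m, c_s > 0 be reals and let r* be the unique x ∈ [0,Q] satisfying c_m·x/Q = c_s·ĝ(x) (such an x exists, is unique, and is the unique minimizer of max{c_m·x/Q, c_s·ĝ(x)} over [0,Q]). Assume 0 < r* ≤ Q−1. Then every (K,N,Q,T)-scheme with singleton Reduce assignment satisfying max{c_m·p, c_s·L} = c_m·r*/Q (i.e., attaining the minimum of max{c_m·x/Q, c_s·ĝ(x)} with equality) has K ≥ Q + ⌈Q/r*⌉. -/
open Finset
open scoped Nat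

namespace Equiv.Perm

variable {α : Type*} [Fintype α] [LinearOrder α]

theorem card_filter_forall_symm_le_eq {A : Finset α} {a b : α} (ha : a ∈ A) (hb : b ∈ A) :
    #{σ : Perm α | ∀ x ∈ A, σ.symm a ≤ σ.symm x} =
      #{σ : Perm α | ∀ x ∈ A, σ.symm b ≤ σ.symm x} := by
  have swap_mem : ∀ {a b x : α}, a ∈ A → b ∈ A → x ∈ A → swap a b x ∈ A := by
    intro a b x ha hb hx
    rw [swap_apply_def]
    split_ifs <;> assumption
  -- Relabelling by `swap a b` exchanges the positions of `a` and `b` and permutes `A`.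
  have mapsTo : ∀ {a b : α}, a ∈ A → b ∈ A → ∀ σ : Perm α,
      (∀ x ∈ A, σ.symm a ≤ σ.symm x) → ∀ x ∈ A, (swap a b * σ).symm b ≤ (swap a b * σ).symm x :=
    fun {a b} ha hb σ hσ x hx => by
      simpa only [show ∀ y, (swap a b * σ).symm y = σ.symm (swap a b y) from fun _ => rfl,
        swap_apply_right] using hσ _ (swap_mem ha hb hx)
  refine card_nbij' (swap a b * ·) (swap a b * ·) (fun σ hσ => ?_) (fun σ hσ => ?_)
    (fun σ _ => swap_mul_self_mul a b σ) (fun σ _ => swap_mul_self_mul a b σ)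
  · simp only [coe_filter, mem_univ, true_and, Set.mem_ofPred_eq] at hσ ⊢
    exact mapsTo ha hb σ hσ
  · simp only [coe_filter, mem_univ, true_and, Set.mem_ofPred_eq] at hσ ⊢
    rw [swap_comm]
    exact mapsTo hb ha σ hσ

theorem card_mul_card_filter_forall_symm_le {A : Finset α} {a : α} (ha : a ∈ A) :
    #A * #{σ : Perm α | ∀ x ∈ A, σ.symm a ≤ σ.symm x} = (Fintype.card α)! := by
  have unique_first : ∀ σ : Perm α, #{b ∈ A | ∀ x ∈ A, σ.symm b ≤ σ.symm x} = 1 := by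
    intro σ
    obtain ⟨b, hb, hmin⟩ := A.exists_min_image σ.symm ⟨a, ha⟩
    refine card_eq_one.mpr ⟨b, eq_singleton_iff_unique_mem.mpr ⟨mem_filter.mpr ⟨hb, hmin⟩, ?_⟩⟩
    intro y hy
    rw [mem_filter] at hy
    exact σ.symm.injective (le_antisymm (hy.2 b hb) (hmin y hy.1))
  calc #A * #{σ : Perm α | ∀ x ∈ A, σ.symm a ≤ σ.symm x}
      = ∑ b ∈ A, #{σ : Perm α | ∀ x ∈ A, σ.symm b ≤ σ.symm x} := by
        rw [sum_congr rfl fun b hb => card_filter_forall_symm_le_eq hb ha, sum_const, smul_eq_mul]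
    _ = ∑ σ : Perm α, #{b ∈ A | ∀ x ∈ A, σ.symm b ≤ σ.symm x} :=
        (sum_card_bipartiteAbove_eq_sum_card_bipartiteBelow _).symm
    _ = (Fintype.card α)! := by simp [unique_first, Fintype.card_perm]

theorem card_add_one_mul_sum_card_filter_forall_symm_le_notMem (B : Finset α) :
    (#B + 1) * ∑ σ : Perm α, #{u | ∀ x, σ.symm x ≤ σ.symm u → x ∉ B} =
      (Fintype.card α - #B) * (Fintype.card α)! := by
  have first_iff : ∀ (σ : Perm α) (u : α), (∀ x, σ.symm x ≤ σ.symm u → x ∉ B) ↔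
      u ∉ B ∧ ∀ x ∈ insert u B, σ.symm u ≤ σ.symm x := by
    intro σ u
    refine ⟨fun h => ⟨h u le_rfl, fun x hx => ?_⟩, fun ⟨hu, h⟩ x hxu hx => ?_⟩
    · rcases mem_insert.mp hx with rfl | hx
      · exact le_rfl
      · exact le_of_not_ge fun hxu => h x hxu hx
    · obtain rfl := σ.symm.injective (le_antisymm hxu (h x (mem_insert_of_mem hx)))
      exact hu hx
  calc (#B + 1) * ∑ σ : Perm α, #{u | ∀ x, σ.symm x ≤ σ.symm u → x ∉ B}
      = (#B + 1) * ∑ σ : Perm α, #{u ∈ Bᶜ | ∀ x ∈ insert u B, σ.symm u ≤ σ.symm x} := by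
        congr 1
        refine sum_congr rfl fun σ _ => congrArg card (Finset.ext fun u => ?_)
        simp only [mem_filter, mem_univ, true_and, mem_compl, first_iff]
    _ = (#B + 1) * ∑ u ∈ Bᶜ, #{σ : Perm α | ∀ x ∈ insert u B, σ.symm u ≤ σ.symm x} :=
        congrArg _ (sum_card_bipartiteAbove_eq_sum_card_bipartiteBelow _)
    _ = ∑ u ∈ Bᶜ, #(insert u B) * #{σ : Perm α | ∀ x ∈ insert u B, σ.symm u ≤ σ.symm x} := by
        rw [mul_sum]
        refine sum_congr rfl fun u hu => ?_
        rw [card_insert_of_notMem (mem_compl.mp hu)]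
    _ = (Fintype.card α - #B) * (Fintype.card α)! := by
        rw [sum_congr rfl fun u _ => card_mul_card_filter_forall_symm_le (mem_insert_self u B),
          sum_const, card_compl, smul_eq_mul]

theorem sum_apply_zero {n : ℕ} [NeZero n] {M : Type*} [AddCommMonoid M] (f : Fin n → M) :
    ∑ σ : Perm (Fin n), f (σ 0) = (n - 1)! • ∑ i, f i := by
  obtain ⟨m, rfl⟩ := Nat.exists_eq_succ_of_ne_zero (NeZero.ne n)
  rw [← decomposeFin.symm.sum_comp, Fintype.sum_prod_type]
  simp [decomposeFin_symm_apply_zero, sum_const, Fintype.card_perm, smul_sum]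

end Equiv.Perm

noncomputable def gNat (Q t : ℕ) : ℝ := ((Q : ℝ) - t) / (Q * (t + 1))

noncomputable def gChord (Q m : ℕ) (x : ℝ) : ℝ := gNat Q m + (gNat Q (m + 1) - gNat Q m) * (x - m)

section Chord

variable {Q : ℕ}

theorem gNat_self : gNat Q Q = 0 := by simp [gNat]

theorem gNat_sub_gChord (hQ : 0 < Q) (m t : ℕ) :
    gNat Q t - gChord Q m t =
      (Q + 1) / (Q * (m + 1) * (m + 2)) * ((t - m) * (t - m - 1) / (t + 1)) := by
  have : (Q : ℝ) ≠ 0 := by positivity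
  unfold gChord gNat
  push_cast
  field_simp
  ring

theorem gChord_le_gNat (hQ : 0 < Q) (m t : ℕ) : gChord Q m t ≤ gNat Q t := by
  have hprod : 0 ≤ ((t : ℝ) - m) * (t - m - 1) := by
    rcases le_or_gt t m with h | h
    · have : (t : ℝ) ≤ m := by exact_mod_cast h
      nlinarith
    · have : (m : ℝ) + 1 ≤ t := by exact_mod_cast h
      nlinarith
  have hpos : 0 ≤ (Q + 1 : ℝ) / (Q * (m + 1) * (m + 2)) * ((t - m) * (t - m - 1) / (t + 1)) := by
    positivity
  linarith [gNat_sub_gChord hQ m t]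

theorem gChord_lt_zero (hQ : 0 < Q) {m : ℕ} (hm : m + 2 ≤ Q) : gChord Q m Q < 0 := by
  have hprod : 0 < ((Q : ℝ) - m) * (Q - m - 1) := by
    have : (m : ℝ) + 2 ≤ Q := by exact_mod_cast hm
    nlinarith
  have hpos : 0 < (Q + 1 : ℝ) / (Q * (m + 1) * (m + 2)) * ((Q - m) * (Q - m - 1) / (Q + 1)) := by
    have : (0 : ℝ) < Q := by exact_mod_cast hQ
    positivity
  have hid := gNat_sub_gChord hQ m Q
  rw [gNat_self] at hid
  linarith

theorem gNat_succ_le (hQ : 0 < Q) (m : ℕ) : gNat Q (m + 1) ≤ gNat Q m := by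
  have : (0 : ℝ) < Q := by exact_mod_cast hQ
  unfold gNat
  rw [div_le_div_iff₀ (by positivity) (by positivity)]
  push_cast
  nlinarith

theorem exists_gHat_eq_gChord {r : ℝ} (hr0 : 0 < r) (hr1 : r ≤ Q - 1) :
    ∃ m : ℕ, m + 2 ≤ Q ∧ gHat Q r = gChord Q m r := by
  have hfloor : gHat Q r = gChord Q ⌊r⌋₊ r := by
    rw [gHat, ← Int.natCast_floor_eq_floor hr0.le, gChord, gNat, gNat]
    push_cast
    ring
  by_cases hm : ⌊r⌋₊ + 2 ≤ Q
  · exact ⟨_, hm, hfloor⟩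
  -- Otherwise `r = Q - 1` is a node of `g`, through which the chord on its left also passes.
  have hfloor_le : (⌊r⌋₊ : ℝ) + 1 ≤ Q := by linarith [Nat.floor_le hr0.le]
  have hQ : Q = ⌊r⌋₊ + 1 := by
    have : ⌊r⌋₊ + 1 ≤ Q := by exact_mod_cast hfloor_le
    omega
  have hr : r = ⌊r⌋₊ := by
    have : (Q : ℝ) = ⌊r⌋₊ + 1 := by exact_mod_cast hQ
    linarith [Nat.floor_le hr0.le]
  obtain ⟨m, hmr⟩ : ∃ m, ⌊r⌋₊ = m + 1 :=
    Nat.exists_eq_succ_of_ne_zero fun h => by rw [h, Nat.cast_zero] at hr; exact hr0.ne' hr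
  refine ⟨m, by omega, ?_⟩
  rw [hfloor, hmr, hr, hmr]
  simp only [gChord]
  push_cast
  ring

theorem card_mul_sub_le_sum_gNat (hQ : 0 < Q) {ι : Type*} (s : Finset ι) (t : ι → ℕ) {m : ℕ}
    {r : ℝ} (hr : gHat Q r = gChord Q m r) (hsum : ∑ i ∈ s, (t i : ℝ) ≤ r * #s) :
    #s * gHat Q r - gChord Q m Q * #{i ∈ s | t i = Q} ≤ ∑ i ∈ s, gNat Q (t i) := by
  have affine : ∀ x, gChord Q m x = gChord Q m r + (gNat Q (m + 1) - gNat Q m) * (x - r) := by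
    intro x; simp only [gChord]; ring
  -- At `t i = Q` the chord lies `-gChord Q m Q` below `g Q = 0`: the strict gain is kept.
  have pointwise :
      ∀ i, gChord Q m (t i) - (if t i = Q then gChord Q m Q else 0) ≤ gNat Q (t i) := by
    intro i
    split_ifs with h
    · rw [h, sub_self, gNat_self]
    · simpa using gChord_le_gNat hQ m (t i)
  have hslope : (gNat Q (m + 1) - gNat Q m) * (∑ i ∈ s, (t i : ℝ) - r * #s) ≥ 0 :=
    mul_nonneg_of_nonpos_of_nonpos (by linarith [gNat_succ_le hQ m]) (by linarith)
  calc #s * gHat Q r - gChord Q m Q * #{i ∈ s | t i = Q}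
      ≤ ∑ i ∈ s, (gChord Q m (t i) - if t i = Q then gChord Q m Q else 0) := by
        rw [sum_sub_distrib, sum_congr rfl fun i _ => affine (t i), ← sum_filter]
        simp only [sum_add_distrib, ← mul_sum, sum_sub_distrib, sum_const, nsmul_eq_mul, hr]
        linarith
    _ ≤ ∑ i ∈ s, gNat Q (t i) := sum_le_sum fun i _ => pointwise i

end Chord

namespace Scheme

variable {K N Q T : ℕ} (S : Scheme K N Q T)

def localView (v : Fin Q × Fin N → Fin T → Bool) (k : Fin K) :
    Fin Q → {n // n ∈ S.M k} → Fin T → Bool :=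
  fun q n => v (q, n.1)

variable {S}

theorem localView_congr {v v' : Fin Q × Fin N → Fin T → Bool} {k : Fin K}
    (h : ∀ q, ∀ n ∈ S.M k, v (q, n) = v' (q, n)) : S.localView v k = S.localView v' k :=
  funext fun q => funext fun n => h q n n.2

theorem apply_eq_of_localView_eq {v v' : Fin Q × Fin N → Fin T → Bool}
    (hmsg : ∀ j, S.enc j (S.localView v j) = S.enc j (S.localView v' j)) {k : Fin K} {q : Fin Q}
    (hq : q ∈ S.W k) (hview : S.localView v k = S.localView v' k) (n : Fin N) :
    v (q, n) = v' (q, n) := by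
  have hdec : S.dec k q hq (fun j => S.enc j (S.localView v j)) (S.localView v k) =
      fun n => v (q, n) := S.correct v k q hq
  rw [funext hmsg, hview] at hdec
  exact congrFun (hdec.symm.trans (S.correct v' k q hq)) n

theorem exists_mem_M_len_pos (hT : 0 < T) {k : Fin K} {q : Fin Q} (hq : q ∈ S.W k) {n : Fin N}
    (hn : n ∉ S.M k) : ∃ j, n ∈ S.M j ∧ 0 < S.len j := by
  by_contra! hsilent
  -- With every server mapping `n` silent, neither the messages nor the view of `k` depend on
  -- `v (q, n)`.
  let v₀ : Fin Q × Fin N → Fin T → Bool := fun _ _ => false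
  let v₁ : Fin Q × Fin N → Fin T → Bool := fun p _ => decide (p = (q, n))
  have hview : ∀ j, n ∉ S.M j → S.localView v₀ j = S.localView v₁ j := fun j hj =>
    localView_congr fun q' n' hn' => by
      have : n' ≠ n := fun h => hj (h ▸ hn')
      simp [v₀, v₁, this]
  have hmsg : ∀ j, S.enc j (S.localView v₀ j) = S.enc j (S.localView v₁ j) := by
    intro j
    by_cases hj : n ∈ S.M j
    · funext i
      exact absurd i.isLt (by have := hsilent j hj; omega)
    · rw [hview j hj]
  have := congrFun (apply_eq_of_localView_eq hmsg hq (hview k hn) n) ⟨0, hT⟩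
  simp [v₀, v₁] at this

theorem mul_card_le_sum_len (P : Finset (Fin Q × Fin N)) (J : Finset (Fin K))
    (hdet : ∀ v v' : Fin Q × Fin N → Fin T → Bool, (∀ p ∉ P, v p = v' p) →
      (∀ j ∈ J, S.enc j (S.localView v j) = S.enc j (S.localView v' j)) → ∀ p ∈ P, v p = v' p) :
    T * #P ≤ ∑ j ∈ J, S.len j := by
  classical
  let extend (w : P → Fin T → Bool) : Fin Q × Fin N → Fin T → Bool :=
    fun p => if h : p ∈ P then w ⟨p, h⟩ else fun _ => false
  let messages (w : P → Fin T → Bool) : (j : J) → Fin (S.len j) → Bool :=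
    fun j => S.enc j (S.localView (extend w) j)
  have hinj : messages.Injective := by
    intro w w' h
    funext p
    simpa [extend] using hdet (extend w) (extend w') (fun p hp => by simp [extend, hp])
      (fun j hj => congrFun h ⟨j, hj⟩) p p.2
  have := Fintype.card_le_of_injective messages hinj
  simp only [Fintype.card_fun, Fintype.card_pi, Fintype.card_bool, Fintype.card_fin,
    Fintype.card_coe, prod_coe_sort (f := fun j => 2 ^ S.len j), prod_pow_eq_pow_sum,
    ← pow_mul] at this
  exact (Nat.pow_le_pow_iff_right one_lt_two).mp this

variable (S) in
/-- Reducers decoding in the order `σ` must learn these values from the messages. -/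
def unmappedBefore (c : Fin Q → Fin K) (σ : Equiv.Perm (Fin Q)) : Finset (Fin Q × Fin N) :=
  {p | ∀ q, σ.symm q ≤ σ.symm p.1 → p.2 ∉ S.M (c q)}

variable {c : Fin Q → Fin K}

theorem eq_on_unmappedBefore (hc : ∀ q, q ∈ S.W (c q)) (σ : Equiv.Perm (Fin Q))
    {v v' : Fin Q × Fin N → Fin T → Bool}
    (hoff : ∀ p ∉ S.unmappedBefore c σ, v p = v' p)
    (hmsg : ∀ j, S.enc j (S.localView v j) = S.enc j (S.localView v' j)) :
    ∀ p ∈ S.unmappedBefore c σ, v p = v' p := by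
  have hrow : ∀ i n, v (σ i, n) = v' (σ i, n) := by
    intro i
    induction i using WellFoundedLT.induction with
    | _ i ih =>
      refine apply_eq_of_localView_eq hmsg (hc (σ i)) (localView_congr fun q n hn => ?_)
      by_cases hp : (q, n) ∈ S.unmappedBefore c σ
      · have hlt : σ.symm q < i := by
          by_contra! hle
          simp only [unmappedBefore, mem_filter, mem_univ, true_and] at hp
          exact hp (σ i) (by simpa using hle) hn
        simpa using ih _ hlt n
      · exact hoff _ hp
  rintro ⟨q, n⟩ -
  simpa using hrow (σ.symm q) n

theorem mul_card_unmappedBefore_add_len_le [NeZero Q] (hc : ∀ q, q ∈ S.W (c q))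
    (σ : Equiv.Perm (Fin Q)) :
    T * #(S.unmappedBefore c σ) + S.len (c (σ 0)) ≤ ∑ j, S.len j := by
  rw [← sum_erase_add _ _ (mem_univ (c (σ 0)))]
  refine Nat.add_le_add_right (mul_card_le_sum_len _ _ fun v v' hoff hmsg =>
    eq_on_unmappedBefore hc σ hoff fun j => ?_) _
  by_cases hj : j = c (σ 0)
  · -- The first reducer sees only values outside the region.
    subst hj
    refine congrArg _ (localView_congr fun q n hn => hoff _ fun hp => ?_)
    simp only [unmappedBefore, mem_filter, mem_univ, true_and] at hp
    exact hp (σ 0) (by simp) hn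
  · exact hmsg j (mem_erase.mpr ⟨hj, mem_univ j⟩)

variable (S) in
def mappingReducers (c : Fin Q → Fin K) (n : Fin N) : Finset (Fin Q) := {q | n ∈ S.M (c q)}

theorem sum_card_mappingReducers : ∑ n, #(S.mappingReducers c n) = ∑ q, #(S.M (c q)) :=
  (sum_card_bipartiteAbove_eq_sum_card_bipartiteBelow fun n q => n ∈ S.M (c q)).trans
    (by simp [bipartiteBelow])

theorem exists_notMem_of_card_mappingReducers_ne {n : Fin N} (h : #(S.mappingReducers c n) ≠ Q) :
    ∃ q, n ∉ S.M (c q) := by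
  by_contra! hall
  exact h (by simp [mappingReducers, hall])

theorem sum_card_unmappedBefore (hQ : 0 < Q) :
    ∑ σ : Equiv.Perm (Fin Q), (#(S.unmappedBefore c σ) : ℝ) =
      Q ! * Q * ∑ n, gNat Q #(S.mappingReducers c n) := by
  have hfiber : ∀ σ : Equiv.Perm (Fin Q), #(S.unmappedBefore c σ) =
      ∑ n, #{q | ∀ q', σ.symm q' ≤ σ.symm q → q' ∉ S.mappingReducers c n} := by
    intro σ
    simp only [unmappedBefore, mappingReducers, card_filter, Fintype.sum_prod_type_right,
      mem_filter, mem_univ, true_and]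
  have hcount : ∀ n, ∑ σ : Equiv.Perm (Fin Q),
      (#{q | ∀ q', σ.symm q' ≤ σ.symm q → q' ∉ S.mappingReducers c n} : ℝ) =
        Q ! * Q * gNat Q #(S.mappingReducers c n) := by
    intro n
    have h : (#(S.mappingReducers c n) + 1) * ∑ σ : Equiv.Perm (Fin Q),
        #{q | ∀ q', σ.symm q' ≤ σ.symm q → q' ∉ S.mappingReducers c n} =
          (Q - #(S.mappingReducers c n)) * Q ! := by
      convert Equiv.Perm.card_add_one_mul_sum_card_filter_forall_symm_le_notMem
        (S.mappingReducers c n) using 4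
      · congr!
      all_goals exact (Fintype.card_fin Q).symm
    have hle : #(S.mappingReducers c n) ≤ Q := card_le_univ _ |>.trans_eq (Fintype.card_fin Q)
    have h' := congrArg (Nat.cast : ℕ → ℝ) h
    push_cast [Nat.cast_sub hle] at h'
    have : (0 : ℝ) < Q := by exact_mod_cast hQ
    rw [gNat]
    field_simp
    linear_combination h'
  simp only [hfiber, Nat.cast_sum]
  rw [sum_comm, mul_sum]
  exact sum_congr rfl fun n _ => hcount n

theorem mul_sum_gNat_add_sum_len_div_le [NeZero Q] (hc : ∀ q, q ∈ S.W (c q)) :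
    Q * T * ∑ n, gNat Q #(S.mappingReducers c n) + (∑ q, (S.len (c q) : ℝ)) / Q ≤
      ∑ j, (S.len j : ℝ) := by
  have hQ : 0 < Q := Nat.pos_of_neZero Q
  have hsum := sum_le_sum fun σ (_ : σ ∈ univ) => mul_card_unmappedBefore_add_len_le hc σ
  rw [sum_add_distrib, ← mul_sum, Equiv.Perm.sum_apply_zero (fun q => S.len (c q)), sum_const,
    card_univ, Fintype.card_perm, Fintype.card_fin, smul_eq_mul, smul_eq_mul] at hsum
  have hsumR : (T : ℝ) * ∑ σ : Equiv.Perm (Fin Q), (#(S.unmappedBefore c σ) : ℝ) +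
      (Q - 1)! * ∑ q, (S.len (c q) : ℝ) ≤ Q ! * ∑ j, (S.len j : ℝ) := by
    exact_mod_cast hsum
  rw [sum_card_unmappedBefore hQ, ← Nat.mul_factorial_pred hQ.ne', Nat.cast_mul] at hsumR
  have hpos : (0 : ℝ) < Q * (Q - 1)! := by positivity
  refine le_of_mul_le_mul_left ?_ hpos
  calc (Q * (Q - 1)! : ℝ) * (Q * T * ∑ n, gNat Q #(S.mappingReducers c n) +
        (∑ q, (S.len (c q) : ℝ)) / Q)
      = T * (Q * (Q - 1)! * Q * ∑ n, gNat Q #(S.mappingReducers c n)) +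
        (Q - 1)! * ∑ q, (S.len (c q) : ℝ) := by
        field_simp
    _ ≤ _ := hsumR

theorem sum_len_div_le_mul_gChord_mul_card [NeZero Q] (hc : ∀ q, q ∈ S.W (c q)) {m : ℕ} {r : ℝ}
    (hr : gHat Q r = gChord Q m r) (hM : ∀ q, (#(S.M (c q)) : ℝ) ≤ r / Q * N)
    (hlen : ∑ j, (S.len j : ℝ) ≤ gHat Q r * (Q * N * T)) :
    (∑ q, (S.len (c q) : ℝ)) / Q ≤ Q * T * gChord Q m Q * #{n | #(S.mappingReducers c n) = Q} := by
  have hQ : 0 < Q := Nat.pos_of_neZero Q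
  have hsum : ∑ n, (#(S.mappingReducers c n) : ℝ) ≤ r * #(univ : Finset (Fin N)) :=
    calc ∑ n, (#(S.mappingReducers c n) : ℝ) = ∑ q, (#(S.M (c q)) : ℝ) := by
          exact_mod_cast sum_card_mappingReducers
      _ ≤ ∑ _q : Fin Q, r / Q * N := sum_le_sum fun q _ => hM q
      _ = r * #(univ : Finset (Fin N)) := by
          rw [sum_const, card_univ, card_univ, Fintype.card_fin, Fintype.card_fin, nsmul_eq_mul]
          field_simp
  have hJ := mul_le_mul_of_nonneg_left (card_mul_sub_le_sum_gNat hQ univ _ hr hsum)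
    (by positivity : (0 : ℝ) ≤ Q * T)
  simp only [card_univ, Fintype.card_fin] at hJ
  linarith [mul_sum_gNat_add_sum_len_div_le hc]

theorem len_eq_zero_and_exists_notMem [NeZero Q] (hc : ∀ q, q ∈ S.W (c q)) (hT : 0 < T)
    {m : ℕ} {r : ℝ} (hm : m + 2 ≤ Q) (hr : gHat Q r = gChord Q m r)
    (hM : ∀ q, (#(S.M (c q)) : ℝ) ≤ r / Q * N)
    (hlen : ∑ j, (S.len j : ℝ) ≤ gHat Q r * (Q * N * T)) :
    (∀ q, S.len (c q) = 0) ∧ ∀ n, ∃ q, n ∉ S.M (c q) := by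
  have hQ : 0 < Q := Nat.pos_of_neZero Q
  have hslack := sum_len_div_le_mul_gChord_mul_card hc hr hM hlen
  have hcoef : Q * T * gChord Q m Q < 0 :=
    mul_neg_of_pos_of_neg (by positivity) (gChord_lt_zero hQ hm)
  set Z := #{n | #(S.mappingReducers c n) = Q}
  set R := ∑ q, (S.len (c q) : ℝ)
  have hR : 0 ≤ R := sum_nonneg fun q _ => (S.len (c q)).cast_nonneg
  have hZ : Z = 0 := by
    have : 0 ≤ Q * T * gChord Q m Q * Z := hslack.trans' (by positivity)
    exact_mod_cast (nonpos_of_mul_nonneg_right this hcoef).antisymm Z.cast_nonneg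
  rw [hZ, Nat.cast_zero, mul_zero, div_le_iff₀ (by positivity), zero_mul] at hslack
  refine ⟨fun q => ?_, fun n => ?_⟩
  · exact_mod_cast (sum_eq_zero_iff_of_nonneg fun q _ => (S.len (c q)).cast_nonneg).mp
      (hslack.antisymm hR) q (mem_univ q)
  · exact exists_notMem_of_card_mappingReducers_ne
      (filter_eq_empty_iff.mp (card_eq_zero.mp hZ) (mem_univ n))

theorem natCast_le_sub_mul_of_len_eq_zero (hT : 0 < T) (hcinj : c.Injective)
    (hc : ∀ q, q ∈ S.W (c q)) (hsilent : ∀ q, S.len (c q) = 0)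
    (hmissed : ∀ n, ∃ q, n ∉ S.M (c q)) {b : ℝ}
    (hM : ∀ k, (#(S.M k) : ℝ) ≤ b) : (N : ℝ) ≤ (K - Q) * b := by
  classical
  have hcover : (univ : Finset (Fin N)) ⊆ (univ.image c)ᶜ.biUnion S.M := by
    intro n _
    obtain ⟨q, hq⟩ := hmissed n
    obtain ⟨j, hn, hpos⟩ := exists_mem_M_len_pos hT (hc q) hq
    refine mem_biUnion.mpr ⟨j, mem_compl.mpr fun hj => ?_, hn⟩
    obtain ⟨q', -, rfl⟩ := mem_image.mp hj
    exact hpos.ne' (hsilent q')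
  have hcard : (#(univ.image c)ᶜ : ℝ) = K - Q := by
    rw [card_compl, card_image_of_injective _ hcinj, card_univ, Fintype.card_fin,
      Fintype.card_fin, Nat.cast_sub (by simpa using Fintype.card_le_of_injective c hcinj)]
  calc (N : ℝ) = #(univ : Finset (Fin N)) := by simp
    _ ≤ #((univ.image c)ᶜ.biUnion S.M) := by exact_mod_cast card_le_card hcover
    _ ≤ ∑ j ∈ (univ.image c)ᶜ, (#(S.M j) : ℝ) := by exact_mod_cast card_biUnion_le
    _ ≤ ∑ j ∈ (univ.image c)ᶜ, b := sum_le_sum fun j _ => hM j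
    _ = (K - Q) * b := by rw [sum_const, nsmul_eq_mul, hcard]

variable (S)

theorem card_M_le_peakLoad_mul (hN : 0 < N) (k : Fin K) : (#(S.M k) : ℝ) ≤ peakLoad S * N := by
  rw [peakLoad, div_mul_cancel₀ _ (by positivity)]
  exact_mod_cast le_sup (f := fun k => #(S.M k)) (mem_univ k)

theorem sum_len_eq_commLoad_mul (hQ : 0 < Q) (hN : 0 < N) (hT : 0 < T) :
    ∑ k, (S.len k : ℝ) = commLoad S * (Q * N * T) := by
  rw [commLoad, div_mul_cancel₀ _ (by positivity)]

end Scheme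

theorem SingletonReduce.exists_injective {K N Q T : ℕ} {S : Scheme K N Q T}
    (hS : SingletonReduce S) : ∃ c : Fin Q → Fin K, c.Injective ∧ ∀ q, q ∈ S.W (c q) := by
  obtain ⟨-, hcover, hcard⟩ := hS
  choose c hc using hcover
  exact ⟨c, fun q q' h => card_le_one.mp (hcard (c q')) q (h ▸ hc q) q' (hc q'), hc⟩

theorem min_servers_parallel_general (Q : ℕ) (hQ : 0 < Q) (cm cs : ℝ) (hcm : 0 < cm)
    (hcs : 0 < cs) (rstar : ℝ)
    (heq : cm * rstar / Q = cs * gHat Q rstar)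
    (h0 : 0 < rstar) (h1 : rstar ≤ (Q : ℝ) - 1)
    (K N T : ℕ) (hN : 0 < N) (hT : 0 < T)
    (S : Scheme K N Q T) (hS : SingletonReduce S)
    (hach : max (cm * peakLoad S) (cs * commLoad S) = cm * rstar / Q) :
    (Q : ℤ) + ⌈(Q : ℝ) / rstar⌉ ≤ (K : ℤ) := by
  have : NeZero Q := ⟨hQ.ne'⟩
  have hp : peakLoad S ≤ rstar / Q :=
    le_of_mul_le_mul_left (mul_div_assoc cm rstar Q ▸ (le_max_left _ _).trans hach.le) hcm
  have hL : commLoad S ≤ gHat Q rstar :=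
    le_of_mul_le_mul_left ((le_max_right _ _).trans (hach.trans heq).le) hcs
  have hM : ∀ k, (#(S.M k) : ℝ) ≤ rstar / Q * N := fun k =>
    (S.card_M_le_peakLoad_mul hN k).trans (by gcongr)
  have hlen : ∑ j, (S.len j : ℝ) ≤ gHat Q rstar * (Q * N * T) :=
    (S.sum_len_eq_commLoad_mul hQ hN hT).trans_le (by gcongr)
  obtain ⟨c, hcinj, hc⟩ := hS.exists_injective
  obtain ⟨m, hm, hr⟩ := exists_gHat_eq_gChord h0 h1
  obtain ⟨hsilent, hmissed⟩ :=
    S.len_eq_zero_and_exists_notMem hc hT hm hr (fun q => hM (c q)) hlen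
  have hcover := S.natCast_le_sub_mul_of_len_eq_zero hT hcinj hc hsilent hmissed hM
  have hratio : (Q : ℝ) / rstar ≤ ((K - Q : ℤ) : ℝ) := by
    have hNR : (0 : ℝ) < N := by exact_mod_cast hN
    rw [div_le_iff₀ h0, ← mul_le_mul_iff_of_pos_left hNR]
    calc (N : ℝ) * Q ≤ (K - Q) * (rstar / Q * N) * Q := by gcongr
      _ = N * ((K - Q : ℤ) * rstar) := by push_cast; field_simp
  linarith [Int.ceil_le.mpr hratio]

/-- minimum number of servers for the parallel implementation.
If `r*` is the unique `x ∈ [0,Q]` with `c_m·x/Q = c_s·ĝ(x)` (the unique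
minimizer of `max{c_m·x/Q, c_s·ĝ(x)}`), `0 < r* ≤ Q−1`, then every scheme with
singleton Reduce assignment attaining `max{c_m·p, c_s·L} = c_m·r*/Q` uses at
least `Q + ⌈Q/r*⌉` servers. -/
theorem min_servers_parallel (Q : ℕ) (hQ : 0 < Q) (cm cs : ℝ) (hcm : 0 < cm)
    (hcs : 0 < cs) (rstar : ℝ) (hmem : rstar ∈ Set.Icc (0 : ℝ) (Q : ℝ))
    (heq : cm * rstar / Q = cs * gHat Q rstar)
    (huniq : ∀ x ∈ Set.Icc (0 : ℝ) (Q : ℝ), cm * x / Q = cs * gHat Q x → x = rstar)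
    (h0 : 0 < rstar) (h1 : rstar ≤ (Q : ℝ) - 1)
    (K N T : ℕ) (hK : 0 < K) (hN : 0 < N) (hT : 0 < T)
    (S : Scheme K N Q T) (hS : SingletonReduce S)
    (hach : max (cm * peakLoad S) (cs * commLoad S) = cm * rstar / Q) :
    (Q : ℤ) + ⌈(Q : ℝ) / rstar⌉ ≤ (K : ℤ) :=
  min_servers_parallel_general Q hQ cm cs hcm hcs rstar heq h0 h1 K N T hN hT S hS hach
end
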